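/- arXiv:1807.07802 — 3 statements merged into one kernel-verified Lean document; each statement's English description precedes it below -/
import Mathlib

section
/- Let 1 → G₁ → G₂ → G₃ → 1 be a short exact sequence of groups. If G₁ and G₃ are both slender and coherent, then G₂ is slender and coherent. -/
def Group.Slender (G : Type*) [Group G] : Prop := ∀ H : Subgroup G, H.FG

def Group.FinitelyPresented (G : Type*) [Group G] : Prop :=
  ∃ (n : ℕ) (rels : Set (FreeGroup (Fin n))), rels.Finite ∧ Nonempty (PresentedGroup rels ≃* G)

def Group.Coherent (G : Type*) [Group G] : Prop :=
  ∀ H : Subgroup G, H.FG → Group.FinitelyPresented H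

/-!
Both properties pass to subgroups, and the sequence restricts to every `H ≤ G₂` as
`1 → H.comap ι → H → H.map π → 1`. So it suffices that an extension of finitely generated
(resp. finitely presented) groups is finitely generated (resp. finitely presented).

For generation, add lifts of generators of the quotient to generators of the kernel. For
presentations, map the free group on generators `x` of `N` and `y` of `Q` to `G`, sending `y` to a
lift. Besides the relators of `N`, impose that every relator of `Q` and every conjugate
`y^{±1} x y^{∓1}` equals some word in the `x`. Modulo these relators the `x` generate a normal
subgroup `B`, hence `B` contains the kernel of the map to `Q`; and the map to `G` is injective on
`B` because `N` embeds in `G`.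
-/

open scoped Pointwise

namespace Subgroup

variable {G : Type*} [Group G]

theorem le_of_le_sup_of_inf_le {H K L : Subgroup G}
    (hKL : ((K ⊔ L : Subgroup G) : Set G) = (K : Set G) * L)
    (hKH : K ≤ H) (hH : H ≤ K ⊔ L) (hHL : H ⊓ L ≤ K) : H ≤ K := by
  intro x hx
  obtain ⟨k, hk, l, hl, rfl⟩ : x ∈ (K : Set G) * L := hKL ▸ hH hx
  have hlH : l ∈ H := by simpa using H.mul_mem (H.inv_mem (hKH hk)) hx
  exact K.mul_mem hk (hHL ⟨hlH, hl⟩)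

theorem normal_sup_closure_of_conj_mem {M : Subgroup G} [M.Normal] {S T : Set G}
    (hS : closure S = ⊤) (hconj : ∀ g ∈ S ∪ S⁻¹, ∀ t ∈ T, g * t * g⁻¹ ∈ M ⊔ closure T) :
    (M ⊔ closure T).Normal := by
  have hmap : ∀ g ∈ S ∪ S⁻¹, ∀ a ∈ M ⊔ closure T, g * a * g⁻¹ ∈ M ⊔ closure T := by
    intro g hg a ha
    have : (M ⊔ closure T).map (MulAut.conj g) ≤ M ⊔ closure T := by
      rw [map_sup, Normal.map_conj_eq M g, MonoidHom.map_closure]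
      refine sup_le le_sup_left ((closure_le _).2 ?_)
      rintro _ ⟨t, ht, rfl⟩
      exact hconj g hg t ht
    exact this ⟨a, ha, rfl⟩
  rw [← normalizer_eq_top_iff, eq_top_iff, ← hS, closure_le]
  intro g hg a
  refine ⟨hmap g (.inl hg) a, fun ha => ?_⟩
  simpa [mul_assoc] using hmap g⁻¹ (.inr (by simpa using hg)) _ ha

end Subgroup

namespace FreeGroup

variable {X Y : Type*}

def projRight : FreeGroup (X ⊕ Y) →* FreeGroup Y :=
  lift (Sum.elim 1 of)

@[simp]
theorem projRight_map_inr (w : FreeGroup Y) : projRight (map (Sum.inr : Y → X ⊕ Y) w) = w := by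
  induction w using FreeGroup.induction_on <;> simp_all [projRight]

theorem comap_projRight_le {A : Subgroup (FreeGroup (X ⊕ Y))} [A.Normal]
    (hX : ∀ x, of (Sum.inl x) ∈ A) {S : Subgroup (FreeGroup Y)} (hS : S.map (map Sum.inr) ≤ A) :
    S.comap projRight ≤ A := by
  have hmk : (QuotientGroup.mk' A).comp ((map Sum.inr).comp projRight) = QuotientGroup.mk' A := by
    ext (x | y)
    · simpa [projRight] using ((QuotientGroup.eq_one_iff _).2 (hX x)).symm
    · simp [projRight]
  intro z hz
  rw [← QuotientGroup.ker_mk' A, MonoidHom.mem_ker, ← hmk, MonoidHom.comp_apply,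
    QuotientGroup.mk'_apply, QuotientGroup.eq_one_iff]
  exact hS ⟨_, hz, rfl⟩

end FreeGroup

namespace ExtensionPresentation

open FreeGroup Function Subgroup

variable {G Q X Y : Type*} [Group G] [Group Q]
variable (α : FreeGroup X →* G) (σ : Q → G) (β : FreeGroup Y →* Q)

def hom : FreeGroup (X ⊕ Y) →* G :=
  FreeGroup.lift (Sum.elim (fun x => α (of x)) (fun y => σ (β (of y))))

theorem hom_map_inl (u : FreeGroup X) : hom α σ β (map Sum.inl u) = α u := by
  induction u using FreeGroup.induction_on <;> simp_all [hom]

variable {α σ β} {π : G →* Q}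

theorem comp_hom (hσ : RightInverse σ π) (hα : α.range ≤ π.ker) :
    π.comp (hom α σ β) = β.comp projRight := by
  ext (x | y)
  · simpa [hom, projRight] using hα ⟨of x, rfl⟩
  · simp [hom, projRight, hσ _]

theorem hom_surjective (hσ : RightInverse σ π) (hα : α.range = π.ker) (hβ : Surjective β) :
    Surjective (hom α σ β) := by
  intro g
  obtain ⟨w, hw⟩ := hβ (π g)
  obtain ⟨u, hu⟩ : g * (hom α σ β (map Sum.inr w))⁻¹ ∈ α.range := by
    rw [hα, MonoidHom.mem_ker, _root_.map_mul, _root_.map_inv, ← MonoidHom.comp_apply π,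
      comp_hom hσ hα.le, MonoidHom.comp_apply, projRight_map_inr, hw, mul_inv_cancel]
  exact ⟨map Sum.inl u * map Sum.inr w, by simp [hom_map_inl, hu]⟩

variable (X Y) in
def conjugates : Set (FreeGroup (X ⊕ Y)) :=
  Set.image2 (fun g t => g * t * g⁻¹) (Set.range of ∪ (Set.range of)⁻¹) (of '' Set.range Sum.inl)

variable (α σ β) in
def relators (RN : Set (FreeGroup X)) (RQ : Set (FreeGroup Y)) (ν : G → FreeGroup X) :
    Set (FreeGroup (X ⊕ Y)) :=
  map Sum.inl '' RN ∪
    (fun c => c * (map Sum.inl (ν (hom α σ β c)))⁻¹) '' (map Sum.inr '' RQ ∪ conjugates X Y)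

theorem relators_finite [Finite X] [Finite Y] {RN : Set (FreeGroup X)} {RQ : Set (FreeGroup Y)}
    (hRN : RN.Finite) (hRQ : RQ.Finite) (ν : G → FreeGroup X) :
    (relators α σ β RN RQ ν).Finite := by
  refine (hRN.image _).union (((hRQ.image _).union ?_).image _)
  exact ((Set.finite_range _).union (Set.finite_range _).inv).image2 _
    ((Set.finite_range _).image _)

theorem subset_ker_comp_hom (hσ : RightInverse σ π) (hα : α.range ≤ π.ker)
    {RQ : Set (FreeGroup Y)} (hβ : β.ker = normalClosure RQ) :
    map Sum.inr '' RQ ∪ conjugates X Y ⊆ (π.comp (hom α σ β)).ker := by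
  rw [comp_hom hσ hα, ← MonoidHom.comap_ker, hβ]
  rintro _ (⟨r, hr, rfl⟩ | ⟨g, -, _, ⟨_, ⟨x, rfl⟩, rfl⟩, rfl⟩)
  · simpa using subset_normalClosure hr
  · simp [projRight]

theorem ker_hom_eq_normalClosure (hσ : RightInverse σ π) (hα : α.range = π.ker)
    {RN : Set (FreeGroup X)} (hαker : α.ker = normalClosure RN)
    {RQ : Set (FreeGroup Y)} (hβ : β.ker = normalClosure RQ)
    {ν : G → FreeGroup X} (hν : ∀ g ∈ π.ker, α (ν g) = g) :
    (hom α σ β).ker = normalClosure (relators α σ β RN RQ ν) := by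
  set M := normalClosure (relators α σ β RN RQ ν)
  set B := (map (Sum.inl : X → X ⊕ Y)).range
  have hMker : M ≤ (hom α σ β).ker := by
    refine normalClosure_le_normal ?_
    rintro _ (⟨r, hr, rfl⟩ | ⟨c, hc, rfl⟩)
    · rw [SetLike.mem_coe, MonoidHom.mem_ker, hom_map_inl, ← MonoidHom.mem_ker, hαker]
      exact subset_normalClosure hr
    · simp [hom_map_inl, hν _ (subset_ker_comp_hom hσ hα.le hβ hc)]
  have hC : ∀ c ∈ map Sum.inr '' RQ ∪ conjugates X Y, c ∈ M ⊔ B := by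
    intro c hc
    have hw : map Sum.inl (ν (hom α σ β c)) ∈ B := ⟨_, rfl⟩
    simpa using mul_mem_sup (subset_normalClosure (.inr ⟨c, hc, rfl⟩) : _ ∈ M) hw
  have hnormal : (M ⊔ B).Normal := by
    rw [show B = _ from range_map] at hC ⊢
    exact normal_sup_closure_of_conj_mem (closure_range_of _)
      fun g hg t ht => hC _ (.inr (Set.mem_image2_of_mem hg ht))
  have hsup : π.ker.comap (hom α σ β) ≤ M ⊔ B := by
    rw [MonoidHom.comap_ker, comp_hom hσ hα.le, ← MonoidHom.comap_ker, hβ]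
    refine comap_projRight_le (fun x => mem_sup_right (MonoidHom.mem_range.2 ⟨of x, rfl⟩)) ?_
    exact map_le_iff_le_comap.2 (normalClosure_le_normal fun r hr => hC _ (.inl ⟨r, hr, rfl⟩))
  have hinf : (hom α σ β).ker ⊓ B ≤ M := by
    rintro _ ⟨hu, u, rfl⟩
    replace hu : u ∈ normalClosure RN := by
      simpa [← hαker, hom_map_inl] using hu
    exact normalClosure_mono Set.subset_union_left (map_normalClosure_le _ _ ⟨u, hu, rfl⟩)
  refine le_antisymm (le_of_le_sup_of_inf_le (normal_mul M B) hMker ?_ hinf) hMker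
  exact (MonoidHom.ker_le_comap _ _).trans hsup

end ExtensionPresentation

open Function Group

theorem Group.finitelyPresented_iff_isFinitelyPresented {G : Type*} [Group G] :
    Group.FinitelyPresented G ↔ Group.IsFinitelyPresented G := by
  constructor
  · rintro ⟨n, rels, hrels, ⟨e⟩⟩
    have := hrels.to_subtype
    exact .equiv e
  · intro h
    obtain ⟨n, rels, hrels, ⟨e⟩⟩ := h.exists_mulEquiv_presentedGroup
    exact ⟨n, rels, hrels, ⟨e.symm⟩⟩

open ExtensionPresentation in
theorem Group.IsFinitelyPresented.of_exact {N G Q : Type*} [Group N] [Group G] [Group Q]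
    (ι : N →* G) (π : G →* Q) (hι : Injective ι) (hπ : Surjective π) (hexact : π.ker = ι.range)
    [hN : IsFinitelyPresented N] [hQ : IsFinitelyPresented Q] : IsFinitelyPresented G := by
  obtain ⟨n, fN, hfN, RN, hRN, hNker⟩ := hN.out
  obtain ⟨m, β, hβ, RQ, hRQ, hQker⟩ := hQ.out
  set α := ι.comp fN
  have hα : α.range = π.ker := by
    rw [hexact, MonoidHom.range_comp, MonoidHom.range_eq_top.2 hfN, ← MonoidHom.range_eq_map]
  have hαker : α.ker = Subgroup.normalClosure RN := by
    rw [MonoidHom.ker_comp_of_injective _ _ hι, hNker]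
  have hν : ∀ g ∈ π.ker, α (invFun α g) = g := fun g hg => invFun_eq (hα.symm ▸ hg : g ∈ α.range)
  have hσ := rightInverse_surjInv hπ
  exact of_surjective (hom α (surjInv hπ) β) (hom_surjective hσ hα hβ)
    ⟨_, relators_finite hRN hRQ _, (ker_hom_eq_normalClosure hσ hα hαker hQker.symm hν).symm⟩

section Restriction

variable {N G Q : Type*} [Group N] [Group G] [Group Q] {ι : N →* G} {π : G →* Q}

theorem Subgroup.fg_of_fg_comap_of_fg_map (hexact : π.ker = ι.range) {H : Subgroup G}
    (h₁ : (H.comap ι).FG) (h₃ : (H.map π).FG) : H.FG := by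
  obtain ⟨S₁, hS₁, hS₁fin⟩ := (Subgroup.fg_iff _).1 h₁
  obtain ⟨S₃, hS₃, hS₃fin⟩ := (Subgroup.fg_iff _).1 h₃
  obtain ⟨T, hTH, hTfin, rfl⟩ : ∃ T ⊆ (H : Set G), T.Finite ∧ S₃ = π '' T :=
    Set.exists_subset_image_finite_and.1
      ⟨S₃, fun s hs => (hS₃ ▸ Subgroup.subset_closure hs : s ∈ H.map π), hS₃fin, rfl⟩
  set K := Subgroup.closure (ι '' S₁ ∪ T)
  have hKH : K ≤ H := by
    rw [Subgroup.closure_le]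
    rintro _ (⟨a, ha, rfl⟩ | hx)
    · exact (hS₁ ▸ Subgroup.subset_closure ha : a ∈ H.comap ι)
    · exact hTH hx
  have hHK : H ≤ K ⊔ π.ker := by
    rw [← Subgroup.comap_map_eq, ← Subgroup.map_le_iff_le_comap, ← hS₃, ← MonoidHom.map_closure]
    exact Subgroup.map_mono (Subgroup.closure_mono Set.subset_union_right)
  have hker : H ⊓ π.ker ≤ K := by
    rw [hexact]
    rintro _ ⟨hx, a, rfl⟩
    have ha : ι a ∈ (Subgroup.closure S₁).map ι := ⟨a, hS₁ ▸ hx, rfl⟩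
    rw [MonoidHom.map_closure] at ha
    exact Subgroup.closure_mono Set.subset_union_left ha
  refine (Subgroup.fg_iff _).2 ⟨ι '' S₁ ∪ T, le_antisymm hKH ?_, (hS₁fin.image _).union hTfin⟩
  exact Subgroup.le_of_le_sup_of_inf_le (Subgroup.mul_normal K _) hKH hHK hker

theorem MonoidHom.subgroupComap_injective (hι : Injective ι) (H : Subgroup G) :
    Injective (ι.subgroupComap H) :=
  fun _ _ h => Subtype.ext (hι (congrArg Subtype.val h))

theorem MonoidHom.ker_subgroupMap_eq_range_subgroupComap (hexact : π.ker = ι.range)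
    (H : Subgroup G) : (π.subgroupMap H).ker = (ι.subgroupComap H).range := by
  ext y
  constructor
  · intro h
    obtain ⟨a, ha⟩ : (y : G) ∈ ι.range := hexact ▸ (congrArg Subtype.val h : π y = 1)
    exact ⟨⟨a, (ha ▸ y.2 : ι a ∈ H)⟩, Subtype.ext ha⟩
  · rintro ⟨⟨a, -⟩, rfl⟩
    exact Subtype.ext (hexact ▸ ⟨a, rfl⟩ : ι a ∈ π.ker)

end Restriction

theorem slender_and_coherent_of_shortExact_general
    {G₁ G₂ G₃ : Type} [Group G₁] [Group G₂] [Group G₃]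
    (ι : G₁ →* G₂) (π : G₂ →* G₃)
    (hι : Function.Injective ι)
    (hexact : π.ker = ι.range)
    (h₁ : Group.Slender G₁ ∧ Group.Coherent G₁)
    (h₃ : Group.Slender G₃ ∧ Group.Coherent G₃) :
    Group.Slender G₂ ∧ Group.Coherent G₂ := by
  obtain ⟨slender₁, coherent₁⟩ := h₁
  obtain ⟨slender₃, coherent₃⟩ := h₃
  refine ⟨fun H => Subgroup.fg_of_fg_comap_of_fg_map hexact (slender₁ _) (slender₃ _),
    fun H _ => ?_⟩
  have := finitelyPresented_iff_isFinitelyPresented.1 (coherent₁ _ (slender₁ (H.comap ι)))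
  have := finitelyPresented_iff_isFinitelyPresented.1 (coherent₃ _ (slender₃ (H.map π)))
  exact finitelyPresented_iff_isFinitelyPresented.2 <|
    .of_exact (ι.subgroupComap H) (π.subgroupMap H) (ι.subgroupComap_injective hι H)
      (π.subgroupMap_surjective H) (MonoidHom.ker_subgroupMap_eq_range_subgroupComap hexact H)

/-- Given a short exact sequence `1 → G₁ → G₂ → G₃ → 1` of groups, if `G₁`
and `G₃` are slender and coherent, then so is `G₂`. -/
theorem slender_and_coherent_of_shortExact
    {G₁ G₂ G₃ : Type} [Group G₁] [Group G₂] [Group G₃]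
    (ι : G₁ →* G₂) (π : G₂ →* G₃)
    (hι : Function.Injective ι) (hπ : Function.Surjective π)
    (hexact : π.ker = ι.range)
    (h₁ : Group.Slender G₁ ∧ Group.Coherent G₁)
    (h₃ : Group.Slender G₃ ∧ Group.Coherent G₃) :
    Group.Slender G₂ ∧ Group.Coherent G₂ :=
  slender_and_coherent_of_shortExact_general ι π hι hexact h₁ h₃
end

section
/- Let Γ = (V,E) be a finite simplicial graph with a vertex labeling φ assigning to each vertex a non-trivial finitely generated abelian group such that #φ(v) ≥ 3 for every v ∈ V. Then the graph product G(Γ) is slender if and only if Γ is a complete graph. -/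
open scoped commutatorElement in
def GraphProduct {V : Type*} (Γ : SimpleGraph V) (φ : V → Type*) [∀ v, Group (φ v)] : Type _ :=
  Monoid.CoprodI φ ⧸ Subgroup.normalClosure
    {x | ∃ (v w : V) (_ : Γ.Adj v w) (a : φ v) (b : φ w),
      x = ⁅Monoid.CoprodI.of a, Monoid.CoprodI.of b⁆}

instance {V : Type*} (Γ : SimpleGraph V) (φ : V → Type*) [∀ v, Group (φ v)] :
    Group (GraphProduct Γ φ) :=
  QuotientGroup.Quotient.group _

def SimpleGraph.NoInducedCycleGT3 {V : Type*} (Γ : SimpleGraph V) : Prop :=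
  ∀ n : ℕ, 4 ≤ n → IsEmpty (SimpleGraph.cycleGraph n ↪g Γ)

/-!
If `Γ` is complete, `G(Γ)` is a finitely generated abelian group, hence a Noetherian `ℤ`-module.

If `v ≠ w` are not adjacent, killing every other vertex group maps `G(Γ)` to the free product
`φ v ∗ φ w`, with both factors in the image. For distinct nontrivial `a₁, a₂ ∈ φ v` and nontrivial
`b ∈ φ w`, ping-pong on reduced words (sorted by their first two letters) shows that the
commutators `⁅aᵢ, b⁆` generate a free group of rank two. That free group maps onto the
lamplighter `ℤ/2 ≀ ℤ`, whose base `⊕_ℤ ℤ/2` is an infinite torsion abelian group and so not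
finitely generated. Pulling it back gives a subgroup of `G(Γ)` that is not finitely generated.
-/

open Monoid CoprodI Word
open scoped commutatorElement

theorem Subgroup.FG.map {G T : Type*} [Group G] [Group T] {K : Subgroup G} (hK : K.FG)
    (f : G →* T) : (K.map f).FG := by
  rw [Subgroup.fg_iff_submonoid_fg] at hK ⊢
  exact hK.map f

theorem Subgroup.FG.of_map_injective {G T : Type*} [Group G] [Group T] {K : Subgroup G}
    {f : G →* T} (hf : Function.Injective f) (hK : (K.map f).FG) : K.FG := by
  rw [Subgroup.fg_iff_submonoid_fg] at hK ⊢
  exact hK.map_injective f hf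

namespace Group.Slender

variable {G H T : Type*} [Group G] [Group H] [Group T]

theorem fg_of_le_range (hG : Slender G) (f : G →* T) {K : Subgroup T} (hK : K ≤ f.range) :
    K.FG := by
  rw [← Subgroup.map_comap_eq_self hK]
  exact (hG _).map f

theorem of_injective_of_range_le (hG : Slender G) (f : G →* T) {g : H →* T}
    (hg : Function.Injective g) (hgf : g.range ≤ f.range) : Slender H := fun K =>
  .of_map_injective hg (hG.fg_of_le_range f ((K.map_le_range g).trans hgf))

theorem of_fg {A : Type*} [CommGroup A] [Group.FG A] : Slender A := by
  intro K
  have : Module.Finite ℤ (Additive A) := Module.Finite.iff_addGroup_fg.2 inferInstance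
  rw [Subgroup.fg_iff_add_fg]
  exact (Submodule.fg_iff_addSubgroup_fg (AddSubgroup.toIntSubmodule K.toAddSubgroup)).1
    (IsNoetherian.noetherian _)

end Group.Slender

namespace Monoid.CoprodI.Word

variable {ι : Type*} {M : ι → Type*} [∀ i, Group (M i)] [DecidableEq ι] [∀ i, DecidableEq (M i)]
  {i j : ι}

theorem toList_of_smul_of_smul (hij : i ≠ j) {a : M i} {b : M j} (ha : a ≠ 1) (hb : b ≠ 1)
    {w : Word M} (hw : w.fstIdx ≠ some j) :
    (of a • of b • w).toList = ⟨i, a⟩ :: ⟨j, b⟩ :: w.toList := by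
  rw [← cons_eq_smul (h1 := hw) (h2 := hb), ← cons_eq_smul (h2 := ha)]
  · rfl
  · simpa [fstIdx_cons] using hij.symm

theorem toList_take_two_commutatorElement_smul (hij : i ≠ j) {a : M i} {b : M j} (ha : a ≠ 1)
    (hb : b ≠ 1) {w : Word M} (hw : w.toList.take 2 ≠ [⟨j, b⟩, ⟨i, a⟩]) :
    (⁅of a, of b⁆ • w).toList.take 2 = [⟨i, a⟩, ⟨j, b⟩] := by
  set v := of a⁻¹ • of b⁻¹ • w
  -- if `v` started with a letter from `M j`, then `w = b • a • v` would start with `b, a`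
  have hwv : w = of b • of a • v := by simp [v, ← mul_smul]
  have hv : v.fstIdx ≠ some j := by
    intro hv
    apply hw
    rw [hwv, toList_of_smul_of_smul hij.symm hb ha (by simpa [hv] using hij.symm)]
    rfl
  have hzv : ⁅of a, of b⁆ • w = of a • of b • v := by
    simp [v, commutatorElement_def, mul_smul, ← map_inv]
  rw [hzv, toList_of_smul_of_smul hij ha hb hv]
  rfl

end Monoid.CoprodI.Word

universe u

namespace Monoid.CoprodI

open scoped Pointwise

theorem injective_lift_commutatorElement {ι : Type u} {M : ι → Type u} [∀ i, Group (M i)]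
    {i j : ι} (hij : i ≠ j) {κ : Type u} [Nontrivial κ] {a : κ → M i}
    (ha : Function.Injective a) (ha1 : ∀ k, a k ≠ 1) {b : M j} (hb : b ≠ 1) :
    Function.Injective (FreeGroup.lift fun k => ⁅of (a k), of b⁆) := by
  classical
  apply FreeGroup.injective_lift_of_ping_pong _
    (fun k => {w : Word M | w.toList.take 2 = [⟨i, a k⟩, ⟨j, b⟩]})
    (fun k => {w : Word M | w.toList.take 2 = [⟨j, b⟩, ⟨i, a k⟩]})
  · intro k
    refine ⟨of (a k) • of b • Word.empty, ?_⟩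
    simp [Word.toList_of_smul_of_smul hij (ha1 k) hb (w := Word.empty) (by simp [Word.fstIdx])]
  · intro k k' hkk'
    refine Set.disjoint_left.2 fun w hw hw' => hkk' (ha ?_)
    simpa using hw.symm.trans hw'
  · intro k k' hkk'
    refine Set.disjoint_left.2 fun w hw hw' => hkk' (ha ?_)
    simpa using hw.symm.trans hw'
  · intro k k'
    refine Set.disjoint_left.2 fun w hw hw' => hij ?_
    simpa using congrArg (fun l => l.head?.map Sigma.fst) (hw.symm.trans hw')
  · rintro k _ ⟨w, hw, rfl⟩
    exact Word.toList_take_two_commutatorElement_smul hij (ha1 k) hb hw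
  · rintro k _ ⟨w, hw, rfl⟩
    rw [Pi.inv_apply, commutatorElement_inv]
    exact Word.toList_take_two_commutatorElement_smul hij.symm hb (ha1 k) hw

end Monoid.CoprodI

open Multiplicative

namespace Lamplighter

noncomputable def shift : Multiplicative ℤ →* MulAut (Multiplicative (ℤ →₀ ZMod 2)) where
  toFun n := AddEquiv.toMultiplicative (Finsupp.domCongr (Equiv.addRight n.toAdd))
  map_one' := by ext; simp [Equiv.Perm.one_def]
  map_mul' m n := by ext; simp [Equiv.Perm.mul_def, add_right_comm]

theorem shift_single (n m : ℤ) (x : ZMod 2) :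
    shift (ofAdd n) (ofAdd (Finsupp.single m x)) = ofAdd (Finsupp.single (m + n) x) := by
  simp [shift]

end Lamplighter

abbrev Lamplighter := Multiplicative (ℤ →₀ ZMod 2) ⋊[Lamplighter.shift] Multiplicative ℤ

namespace Lamplighter

open SemidirectProduct

theorem inl_single_one_mem {H : Subgroup Lamplighter} (ht : inr (ofAdd 1) ∈ H)
    (ha : inl (ofAdd (Finsupp.single 0 1)) ∈ H) (n : ℤ) :
    inl (ofAdd (Finsupp.single n 1)) ∈ H := by
  have : (inl (ofAdd (Finsupp.single n 1)) : Lamplighter) =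
      inr (ofAdd 1) ^ n * inl (ofAdd (Finsupp.single 0 1)) * (inr (ofAdd 1) ^ n)⁻¹ := by
    rw [← map_zpow, ← map_inv, ← inl_aut, ← ofAdd_zsmul, shift_single]
    simp
  rw [this]
  exact mul_mem (mul_mem (zpow_mem ht n) ha) (inv_mem (zpow_mem ht n))

theorem not_slender_of_mem_range {G : Type*} [Group G] {f : G →* Lamplighter}
    (ht : inr (ofAdd 1) ∈ f.range) (ha : inl (ofAdd (Finsupp.single 0 1)) ∈ f.range) :
    ¬ Group.Slender G := by
  intro hG
  set N := f.range.comap inl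
  have : Group.FG N := (Group.fg_iff_subgroup_fg N).2 <|
    .of_map_injective inl_injective (hG.fg_of_le_range f (Subgroup.map_comap_le _ _))
  have : Finite N := by
    refine CommGroup.finite_of_fg_isMulTorsion N fun x =>
      isOfFinOrder_iff_pow_eq_one.2 ⟨2, two_pos, ?_⟩
    ext1
    apply toAdd.injective
    ext n
    simp [two_nsmul, ← two_mul, show (2 : ZMod 2) = 0 from rfl]
  have : Finite ℤ := Finite.of_injective (fun n => (⟨_, inl_single_one_mem ht ha n⟩ : N))
    fun m n h => Finsupp.single_left_injective one_ne_zero (toAdd.injective (Subtype.ext_iff.1 h))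
  exact not_finite ℤ

end Lamplighter

theorem FreeGroup.not_slender {α : Type*} [Nontrivial α] : ¬ Group.Slender (FreeGroup α) := by
  classical
  obtain ⟨x, y, hxy⟩ := exists_pair_ne α
  refine Lamplighter.not_slender_of_mem_range
    (f := FreeGroup.lift fun k => if k = x then .inr (ofAdd 1) else .inl (ofAdd (.single 0 1)))
    ⟨of x, by simp⟩ ⟨of y, by simp [hxy.symm]⟩

instance Monoid.CoprodI.fg {ι : Type*} [Finite ι] {G : ι → Type*} [∀ i, Group (G i)]
    [∀ i, Group.FG (G i)] : Group.FG (CoprodI G) := by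
  have htop : (⊤ : Subgroup (CoprodI G)) = ⨆ i, (of : G i →* CoprodI G).range := by
    rw [← range_eq_iSup, lift_of', MonoidHom.range_eq_top.2 Function.surjective_id]
  exact Group.fg_def.2 (htop ▸ .iSup _ fun i => (Group.fg_iff_subgroup_fg _).1 inferInstance)

namespace GraphProduct

variable {V : Type*} {Γ : SimpleGraph V} {φ : V → Type*} [∀ v, Group (φ v)]

def mk : CoprodI φ →* GraphProduct Γ φ :=
  QuotientGroup.mk' _

theorem mk_surjective : Function.Surjective (mk : CoprodI φ →* GraphProduct Γ φ) :=
  QuotientGroup.mk'_surjective _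

theorem commute_mk_of {v w : V} (h : Γ.Adj v w) (a : φ v) (b : φ w) :
    Commute (mk (Γ := Γ) (of a)) (mk (of b)) := by
  rw [Commute, SemiconjBy, ← commutatorElement_eq_one_iff_mul_comm, ← map_commutatorElement]
  exact (QuotientGroup.eq_one_iff _).2 (Subgroup.subset_normalClosure ⟨v, w, h, a, b, rfl⟩)

def lift {T : Type*} [Group T] (f : ∀ v, φ v →* T)
    (hf : ∀ v w, Γ.Adj v w → ∀ (a : φ v) (b : φ w), Commute (f v a) (f w b)) :
    GraphProduct Γ φ →* T :=
  QuotientGroup.lift _ (CoprodI.lift f) <| Subgroup.normalClosure_le_normal <| by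
    rintro _ ⟨v, w, h, a, b, rfl⟩
    rw [SetLike.mem_coe, MonoidHom.mem_ker, map_commutatorElement, lift_of, lift_of,
      commutatorElement_eq_one_iff_commute]
    exact hf v w h a b

theorem lift_mk_of {T : Type*} [Group T] (f : ∀ v, φ v →* T)
    (hf : ∀ v w, Γ.Adj v w → ∀ (a : φ v) (b : φ w), Commute (f v a) (f w b)) {v : V} (a : φ v) :
    lift f hf (mk (of a)) = f v a :=
  lift_of f a

theorem exists_hom_coprodI_of_isIndepSet {S : Set V} (hS : Γ.IsIndepSet S) :
    ∃ f : GraphProduct Γ φ →* CoprodI φ, ∀ v ∈ S, ∀ a : φ v, f (mk (of a)) = of a := by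
  classical
  refine ⟨lift (fun v => if v ∈ S then of else 1) fun v w h a b => ?_, fun v hv a => ?_⟩
  · by_cases hv : v ∈ S
    · by_cases hw : w ∈ S
      · exact absurd h (hS hv hw h.ne)
      · simp [hw]
    · simp [hv]
  · simp [lift_mk_of, hv]

instance fg [Finite V] [∀ v, Group.FG (φ v)] : Group.FG (GraphProduct Γ φ) :=
  Group.fg_of_surjective mk_surjective

end GraphProduct

theorem GraphProduct.commute_of_forall_adj {V : Type*} {Γ : SimpleGraph V} {φ : V → Type*}
    [∀ v, CommGroup (φ v)] (hΓ : ∀ v w, v ≠ w → Γ.Adj v w) (x y : GraphProduct Γ φ) :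
    Commute x y := by
  obtain ⟨x, rfl⟩ := mk_surjective x
  obtain ⟨y, rfl⟩ := mk_surjective y
  induction x using CoprodI.induction_on with
  | one => simp
  | mul x x' hx hx' => rw [map_mul]; exact hx.mul_left hx'
  | of v a =>
    induction y using CoprodI.induction_on with
    | one => simp
    | mul y y' hy hy' => rw [map_mul]; exact hy.mul_right hy'
    | of w b =>
      by_cases hvw : v = w
      · subst hvw
        exact ((Commute.all a b).map of).map mk
      · exact commute_mk_of (hΓ v w hvw) a b

theorem GraphProduct.not_slender_of_not_adj {V : Type u} {Γ : SimpleGraph V} {φ : V → Type u}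
    [∀ v, Group (φ v)] {v w : V} (hvw : v ≠ w) (hadj : ¬ Γ.Adj v w) (hv : 3 ≤ Cardinal.mk (φ v))
    [Nontrivial (φ w)] : ¬ Group.Slender (GraphProduct Γ φ) := by
  obtain ⟨f, hf⟩ := exists_hom_coprodI_of_isIndepSet (Γ := Γ) (φ := φ) (S := {v, w})
    (Set.pairwise_pair.2 fun _ => ⟨hadj, fun h => hadj h.symm⟩)
  obtain ⟨b, hb⟩ := exists_ne (1 : φ w)
  obtain ⟨a₁, ha₁, -⟩ := Cardinal.exists_ne_ne_of_three_le hv 1 1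
  obtain ⟨a₂, ha₂, ha₂₁⟩ := Cardinal.exists_ne_ne_of_three_le hv 1 a₁
  have : Nontrivial {a : φ v // a ≠ 1} := ⟨⟨a₁, ha₁⟩, ⟨a₂, ha₂⟩, by simpa using ha₂₁.symm⟩
  intro hs
  refine FreeGroup.not_slender <| hs.of_injective_of_range_le f
    (CoprodI.injective_lift_commutatorElement hvw Subtype.val_injective
      (fun a : {a : φ v // a ≠ 1} => a.2) hb) (FreeGroup.range_lift_le ?_)
  rintro _ ⟨a, rfl⟩
  exact ⟨⁅mk (of a.1), mk (of b)⁆, by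
    rw [map_commutatorElement, hf v (by simp) a, hf w (by simp) b]⟩

/-- Let `Γ` be a finite simplicial graph with each vertex labeled by a
non-trivial finitely generated abelian group of cardinality at least `3`.  Then the graph
product `G(Γ)` is slender if and only if `Γ` is a complete graph. -/
theorem graphProduct_slender_iff_complete
    {V : Type} [Fintype V] (Γ : SimpleGraph V)
    (φ : V → Type) [∀ v, CommGroup (φ v)] [∀ v, Nontrivial (φ v)]
    (hfg : ∀ v, Group.FG (φ v))
    (hcard : ∀ v, 3 ≤ Cardinal.mk (φ v)) :
    Group.Slender (GraphProduct Γ φ) ↔ ∀ v w : V, v ≠ w → Γ.Adj v w := by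
  constructor
  · intro hs v w hvw
    by_contra hadj
    exact GraphProduct.not_slender_of_not_adj hvw hadj (hcard v) hs
  · intro hΓ
    have := hfg
    let : CommGroup (GraphProduct Γ φ) :=
      { mul_comm := fun x y => (GraphProduct.commute_of_forall_adj hΓ x y).eq }
    exact Group.Slender.of_fg
end

section
/- Let Γ be a finite connected simplicial graph that is not complete. If Γ has no induced cycle of length greater than 3, then there exist proper induced subgraphs Γ₁ and Γ₂ of Γ such that Γ = Γ₁ ∪ Γ₂ and Γ₁ ∩ Γ₂ is a complete graph. -/
/-!
Dirac's argument. Pick non-adjacent vertices `a`, `b` and an inclusion-minimal set `S` separating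
them; let `A` be the component of `a` in `Γ - S`, and take `Γ₁ = A ∪ S`, `Γ₂ = Aᶜ`, so that
`Γ₁ ∩ Γ₂ = S`. By minimality every vertex of `S` has a neighbour in `A` and one in the component `B`
of `b`. If `x, y ∈ S` were distinct and non-adjacent, shortest `x`–`y` paths through `A` and
through `B` would be chordless, and since no edge joins `A` to `B` they would close up to an induced
cycle of length at least 4.
-/

namespace SimpleGraph

variable {V V' : Type*} {G : SimpleGraph V} {u v w x y : V}

namespace Walk

theorem isChordless_of_length_eq_dist (p : G.Walk u v) (hp : p.length = G.dist u v) :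
    p.IsChordless := by
  refine isChordless_iff_forall_mem_edges.mpr fun a b ha hb hab => ?_
  suffices key : ∀ i j, i < j → j ≤ p.length → G.Adj (p.getVert i) (p.getVert j) →
      s(p.getVert i, p.getVert j) ∈ p.edges by
    obtain ⟨i, rfl, hi⟩ := mem_support_iff_exists_getVert.mp ha
    obtain ⟨j, rfl, hj⟩ := mem_support_iff_exists_getVert.mp hb
    rcases lt_trichotomy i j with hij | rfl | hij
    · exact key i j hij hj hab
    · exact absurd hab (G.irrefl)
    · rw [Sym2.eq_swap]; exact key j i hij hi hab.symm
  intro i j hij hj hadj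
  have hsub : ((p.drop i).take (j - i)).IsSubwalk p :=
    (isSubwalk_take _ _).trans (isSubwalk_drop _ _)
  have hlen := length_eq_dist_of_subwalk hp hsub
  rw [take_length, drop_length, drop_getVert, show i + (j - i) = j by omega,
    dist_eq_one_iff_adj.mpr hadj] at hlen
  refine (mk_mem_edges_iff_exists p).mpr ⟨i, by omega, ?_⟩
  rw [show j = i + 1 by omega]

theorem IsChordless.map {G' : SimpleGraph V'} (f : G ↪g G') {p : G.Walk u v}
    (hp : p.IsChordless) : (p.map f.toHom).IsChordless := by
  refine isChordless_iff_forall_mem_edges.mpr fun a b ha hb hab => ?_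
  simp only [support_map, List.mem_map] at ha hb
  obtain ⟨a, ha, rfl⟩ := ha
  obtain ⟨b, hb, rfl⟩ := hb
  rw [edges_map]
  exact List.mem_map_of_mem (f := Sym2.map f.toHom) (hp.mem_edges ha hb (f.map_adj_iff.mp hab))

theorem IsChordless.reverse {p : G.Walk u v} (hp : p.IsChordless) : p.reverse.IsChordless := by
  refine isChordless_iff_forall_mem_edges.mpr fun a b ha hb hab => ?_
  rw [support_reverse, List.mem_reverse] at ha hb
  rw [edges_reverse, List.mem_reverse]
  exact hp.mem_edges ha hb hab

theorem IsChordless.append {p : G.Walk u v} {q : G.Walk v w} (hp : p.IsChordless)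
    (hq : q.IsChordless)
    (hpq : ∀ a ∈ p.support, ∀ b ∈ q.support, G.Adj a b → a ∈ q.support ∨ b ∈ p.support) :
    (p.append q).IsChordless := by
  refine isChordless_iff_forall_mem_edges.mpr fun a b ha hb hab => ?_
  rw [mem_support_append_iff] at ha hb
  rw [edges_append, List.mem_append]
  have hp' (ha : a ∈ p.support) (hb : b ∈ p.support) : s(a, b) ∈ p.edges ∨ s(a, b) ∈ q.edges :=
    Or.inl (hp.mem_edges ha hb hab)
  have hq' (ha : a ∈ q.support) (hb : b ∈ q.support) : s(a, b) ∈ p.edges ∨ s(a, b) ∈ q.edges :=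
    Or.inr (hq.mem_edges ha hb hab)
  rcases ha with ha | ha <;> rcases hb with hb | hb
  · exact hp' ha hb
  · exact (hpq a ha b hb hab).elim (hq' · hb) (hp' ha)
  · exact (hpq b hb a ha hab.symm).elim (hq' ha) (hp' · hb)
  · exact hq' ha hb

theorem IsPath.start_notMem_support_tail {p : G.Walk u v} (hp : p.IsPath) :
    u ∉ p.support.tail := by
  have hnodup := hp.support_nodup
  rw [← p.cons_tail_support] at hnodup
  exact (List.nodup_cons.mp hnodup).1

theorem getVert_succ_mod_length {c : G.Walk u u} {k : ℕ} (hk : k < c.length) :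
    c.getVert ((k + 1) % c.length) = c.getVert (k + 1) := by
  rcases Nat.lt_or_ge (k + 1) c.length with h | h
  · rw [Nat.mod_eq_of_lt h]
  · rw [show k + 1 = c.length by omega, Nat.mod_self, getVert_zero, getVert_length]

theorem IsCycle.nonempty_cycleGraph_embedding {c : G.Walk u u} (hc : c.IsCycle)
    (hch : c.IsChordless) : Nonempty (cycleGraph c.length ↪g G) := by
  obtain ⟨m, hm⟩ : ∃ m, c.length = m + 2 := ⟨c.length - 2, by have := hc.three_le_length; omega⟩
  let f : Fin (m + 2) → V := fun i => c.getVert i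
  have hf_inj : Function.Injective f := fun i j h =>
    Fin.ext (hc.getVert_injOn' (by simp; omega) (by simp; omega) h)
  have hf_succ (i : Fin (m + 2)) : f (i + 1) = c.getVert (i + 1) := by
    have := getVert_succ_mod_length (c := c) (k := i) (by omega)
    rwa [hm] at this
  rw [hm]
  refine ⟨⟨⟨f, hf_inj⟩, fun {i j} => ?_⟩⟩
  simp only [Function.Embedding.coeFn_mk, cycleGraph_adj, sub_eq_iff_eq_add']
  constructor
  · intro hadj
    obtain ⟨k, hk, hkij⟩ := c.mk_mem_edges_iff_exists.mp
      (hch.mem_edges (c.getVert_mem_support _) (c.getVert_mem_support _) hadj)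
    let k' : Fin (m + 2) := ⟨k, hm ▸ hk⟩
    rw [← hf_succ k'] at hkij
    rcases Sym2.eq_iff.mp hkij with ⟨h₁, h₂⟩ | ⟨h₁, h₂⟩
    · have e₁ : k' = i := hf_inj h₁
      exact Or.inr (e₁ ▸ (hf_inj h₂).symm)
    · have e₁ : k' = j := hf_inj h₁
      exact Or.inl (e₁ ▸ (hf_inj h₂).symm)
  · rintro (rfl | rfl)
    · rw [hf_succ]
      exact (c.adj_getVert_succ (by omega)).symm
    · rw [hf_succ]
      exact c.adj_getVert_succ (by omega)

theorem exists_isPath_isChordless_of_support_subset {W : Set V} (p : G.Walk u v)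
    (hp : ∀ w ∈ p.support, w ∈ W) :
    ∃ q : G.Walk u v, q.IsPath ∧ q.IsChordless ∧ ∀ w ∈ q.support, w ∈ W := by
  obtain ⟨r, hr⟩ := (p.induce W hp).reachable.exists_walk_length_eq_dist
  have hW : ∀ w ∈ (r.map (Embedding.induce W).toHom).support, w ∈ W := by
    simp only [support_map, List.mem_map]
    rintro _ ⟨w, -, rfl⟩
    exact w.2
  exact ⟨r.map (Embedding.induce W).toHom,
    (r.isPath_of_length_eq_dist hr).map Subtype.val_injective,
    (r.isChordless_of_length_eq_dist hr).map _, hW⟩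

end Walk

open Walk in
theorem exists_cycleGraph_embedding_of_isChordless_paths {p q : G.Walk x y}
    (hp : p.IsPath) (hpc : p.IsChordless) (hq : q.IsPath) (hqc : q.IsChordless)
    (hxy : x ≠ y) (hnadj : ¬G.Adj x y)
    (hpq : ∀ a ∈ p.support, ∀ b ∈ q.support, (a = b ∨ G.Adj a b) →
      a = x ∨ a = y ∨ b = x ∨ b = y) :
    ∃ n, 4 ≤ n ∧ Nonempty (cycleGraph n ↪g G) := by
  have two_le_length (r : G.Walk x y) : 2 ≤ r.length :=
    (r.reachable.one_lt_dist_of_ne_of_not_adj hxy hnadj).trans_le (dist_le r)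
  have hqsupp : ∀ {b}, b ∈ q.reverse.support → b ∈ q.support := by
    simp [support_reverse]
  have hdisj : p.support.tail.Disjoint q.reverse.support.tail := by
    intro a hpa hqa
    have hax : a ≠ x := fun h => hp.start_notMem_support_tail (h ▸ hpa)
    have hay : a ≠ y := fun h => hq.reverse.start_notMem_support_tail (h ▸ hqa)
    have := hpq a (List.mem_of_mem_tail hpa) a (hqsupp (List.mem_of_mem_tail hqa)) (Or.inl rfl)
    tauto
  have hcycle : (p.append q.reverse).IsCycle :=
    hp.isCycle_append hq.reverse hdisj (Or.inl (two_le_length p))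
  have hchordless : (p.append q.reverse).IsChordless := by
    refine hpc.append hqc.reverse fun a ha b hb hab => ?_
    rcases hpq a ha b (hqsupp hb) (Or.inr hab) with rfl | rfl | rfl | rfl
    · exact Or.inl (end_mem_support _)
    · exact Or.inl (start_mem_support _)
    · exact Or.inr (start_mem_support _)
    · exact Or.inr (end_mem_support _)
  refine ⟨_, ?_, hcycle.nonempty_cycleGraph_embedding hchordless⟩
  have := two_le_length p
  have := two_le_length q
  simp only [length_append, length_reverse]
  omega

def ReachableAvoiding (G : SimpleGraph V) (S : Set V) (u v : V) : Prop :=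
  ∃ p : G.Walk u v, ∀ w ∈ p.support, w ∉ S

def Separates (G : SimpleGraph V) (S : Set V) (a b : V) : Prop :=
  a ∉ S ∧ b ∉ S ∧ ¬G.ReachableAvoiding S a b

variable {S : Set V} {a b : V}

namespace ReachableAvoiding

theorem refl (hu : u ∉ S) : G.ReachableAvoiding S u u :=
  ⟨.nil, by simpa⟩

theorem symm (h : G.ReachableAvoiding S u v) : G.ReachableAvoiding S v u := by
  obtain ⟨p, hp⟩ := h
  exact ⟨p.reverse, by simpa using hp⟩

theorem trans (h₁ : G.ReachableAvoiding S u v) (h₂ : G.ReachableAvoiding S v w) :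
    G.ReachableAvoiding S u w := by
  obtain ⟨p, hp⟩ := h₁
  obtain ⟨q, hq⟩ := h₂
  refine ⟨p.append q, fun z hz => ?_⟩
  rcases (Walk.mem_support_append_iff p q).mp hz with hz | hz
  exacts [hp z hz, hq z hz]

theorem notMem_right (h : G.ReachableAvoiding S u v) : v ∉ S := by
  obtain ⟨p, hp⟩ := h
  exact hp v p.end_mem_support

theorem trans_adj (h : G.ReachableAvoiding S u v) (hvw : G.Adj v w) (hw : w ∉ S) :
    G.ReachableAvoiding S u w :=
  h.trans ⟨hvw.toWalk, by simp [h.notMem_right, hw]⟩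

theorem of_mem_support (h : G.ReachableAvoiding S a u) {p : G.Walk u v}
    (hp : ∀ z ∈ p.support, z ∉ S) (hw : w ∈ p.support) : G.ReachableAvoiding S a w := by
  classical
  exact h.trans ⟨p.takeUntil w hw, fun z hz => hp z (p.support_takeUntil_subset_support hw hz)⟩

end ReachableAvoiding

theorem Separates.symm (h : G.Separates S a b) : G.Separates S b a :=
  ⟨h.2.1, h.1, fun h' => h.2.2 h'.symm⟩

theorem Separates.exists_adj_of_reachableAvoiding_diff {s : V} (hS : G.Separates S a b)
    (h : G.ReachableAvoiding (S \ {s}) a b) : ∃ u, G.ReachableAvoiding S a u ∧ G.Adj u s := by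
  obtain ⟨p, hp⟩ := h
  obtain ⟨d, hd, hd₁, hd₂⟩ := p.exists_boundary_dart {u | G.ReachableAvoiding S a u}
    (ReachableAvoiding.refl hS.1) hS.2.2
  have hs : d.snd = s := by
    by_contra hne
    exact hd₂ (hd₁.trans_adj d.adj fun hmem =>
      hp _ (p.dart_snd_mem_support_of_mem_darts hd) ⟨hmem, hne⟩)
  exact ⟨d.fst, hd₁, hs ▸ d.adj⟩

theorem exists_adj_of_minimal_separates (hS : Minimal (G.Separates · a b) S) {s : V}
    (hs : s ∈ S) : ∃ u, G.ReachableAvoiding S a u ∧ G.Adj u s := by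
  refine hS.prop.exists_adj_of_reachableAvoiding_diff (by_contra fun h => ?_)
  have hsep : G.Separates (S \ {s}) a b :=
    ⟨fun ha => hS.prop.1 ha.1, fun hb => hS.prop.2.1 hb.1, h⟩
  exact (hS.2 hsep Set.sdiff_subset hs).2 rfl

theorem exists_minimal_separates [Finite V] (hab : a ≠ b) (hnadj : ¬G.Adj a b) :
    ∃ S, Minimal (G.Separates · a b) S := by
  have hsep : G.Separates {a, b}ᶜ a b := by
    refine ⟨by simp, by simp, fun ⟨p, hp⟩ => ?_⟩
    have hnil : ¬p.Nil := Walk.not_nil_of_ne hab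
    have hsnd := hp _ (p.getVert_mem_support 1)
    simp only [Set.mem_compl_iff, Set.mem_insert_iff, Set.mem_singleton_iff, not_not] at hsnd
    rcases hsnd with h | h
    · exact (p.adj_snd hnil).ne h.symm
    · exact hnadj (h ▸ p.adj_snd hnil)
  obtain ⟨S, -, hS⟩ := exists_minimal_le_of_wellFoundedLT (G.Separates · a b) _ hsep
  exact ⟨S, hS⟩

theorem exists_isPath_isChordless_via_reachableAvoiding {x₁ y₁ : V}
    (hx₁ : G.ReachableAvoiding S a x₁) (hxx₁ : G.Adj x x₁)
    (hy₁ : G.ReachableAvoiding S a y₁) (hyy₁ : G.Adj y₁ y) :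
    ∃ p : G.Walk x y, p.IsPath ∧ p.IsChordless ∧
      ∀ w ∈ p.support, w = x ∨ w = y ∨ G.ReachableAvoiding S a w := by
  obtain ⟨r, hr⟩ := hx₁.symm.trans hy₁
  refine (Walk.cons hxx₁ (r.concat hyy₁)).exists_isPath_isChordless_of_support_subset
    (W := {w | w = x ∨ w = y ∨ G.ReachableAvoiding S a w}) fun w hw => ?_
  simp only [Walk.support_cons, Walk.support_concat, List.mem_cons, List.mem_append,
    List.mem_nil_iff, or_false] at hw
  rcases hw with rfl | hw | rfl
  · exact Or.inl rfl
  · exact Or.inr (Or.inr (hx₁.of_mem_support hr hw))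
  · exact Or.inr (Or.inl rfl)

theorem NoInducedCycleGT3.isClique_of_minimal_separates (hG : G.NoInducedCycleGT3)
    (hS : Minimal (G.Separates · a b) S) : G.IsClique S := by
  have hS' : Minimal (G.Separates · b a) S :=
    ⟨hS.prop.symm, fun T hT hle => hS.2 hT.symm hle⟩
  have hAB {u w : V} (hu : G.ReachableAvoiding S a u) (hw : G.ReachableAvoiding S b w) :
      u ≠ w ∧ ¬G.Adj u w :=
    ⟨fun h => hS.prop.2.2 (hu.trans (h ▸ hw.symm)),
      fun h => hS.prop.2.2 (hu.trans (hw.trans_adj h.symm hu.notMem_right).symm)⟩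
  intro x hx y hy hxy
  by_contra hnadj
  obtain ⟨x₁, hx₁, hxx₁⟩ := exists_adj_of_minimal_separates hS hx
  obtain ⟨y₁, hy₁, hyy₁⟩ := exists_adj_of_minimal_separates hS hy
  obtain ⟨x₂, hx₂, hxx₂⟩ := exists_adj_of_minimal_separates hS' hx
  obtain ⟨y₂, hy₂, hyy₂⟩ := exists_adj_of_minimal_separates hS' hy
  obtain ⟨p, hp, hpc, hpA⟩ :=
    exists_isPath_isChordless_via_reachableAvoiding hx₁ hxx₁.symm hy₁ hyy₁
  obtain ⟨q, hq, hqc, hqB⟩ :=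
    exists_isPath_isChordless_via_reachableAvoiding hx₂ hxx₂.symm hy₂ hyy₂
  obtain ⟨n, hn, ⟨e⟩⟩ := exists_cycleGraph_embedding_of_isChordless_paths hp hpc hq hqc hxy hnadj
    fun u hu w hw huw => by
      rcases hpA u hu with rfl | rfl | hu <;> try tauto
      rcases hqB w hw with rfl | rfl | hw <;> try tauto
      exact absurd huw (not_or.mpr (hAB hu hw))
  exact (hG n hn).false e

end SimpleGraph

theorem exists_clique_cut_decomposition_of_noInducedCycleGT3_general
    {V : Type} [Fintype V] (Γ : SimpleGraph V)
    (hnotcomplete : ¬ ∀ v w : V, v ≠ w → Γ.Adj v w)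
    (hchordal : Γ.NoInducedCycleGT3) :
    ∃ S₁ S₂ : Set V,
      S₁ ≠ Set.univ ∧ S₂ ≠ Set.univ ∧
      S₁ ∪ S₂ = Set.univ ∧
      (∀ v w : V, Γ.Adj v w → (v ∈ S₁ ∧ w ∈ S₁) ∨ (v ∈ S₂ ∧ w ∈ S₂)) ∧
      (∀ v w : V, v ∈ S₁ ∩ S₂ → w ∈ S₁ ∩ S₂ → v ≠ w → Γ.Adj v w) := by
  push Not at hnotcomplete
  obtain ⟨a, b, hab, hnadj⟩ := hnotcomplete
  obtain ⟨S, hS⟩ := Γ.exists_minimal_separates hab hnadj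
  obtain ⟨haS, hbS, hsep⟩ := hS.prop
  set A := {v | Γ.ReachableAvoiding S a v}
  have hA_adj {v w : V} (hv : v ∈ A) (hvw : Γ.Adj v w) : w ∈ A ∪ S := by
    by_cases hw : w ∈ S
    exacts [Or.inr hw, Or.inl (SimpleGraph.ReachableAvoiding.trans_adj hv hvw hw)]
  refine ⟨A ∪ S, Aᶜ, fun h => ?_, fun h => ?_, ?_, fun v w hvw => ?_, fun v w hv hw hvw => ?_⟩
  · rcases h.symm ▸ Set.mem_univ b with hb | hb
    exacts [hsep hb, hbS hb]
  · exact (h.symm ▸ Set.mem_univ a) (SimpleGraph.ReachableAvoiding.refl haS)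
  · rw [Set.union_right_comm, Set.union_compl_self, Set.univ_union]
  · by_cases hv : v ∈ A
    · exact Or.inl ⟨Or.inl hv, hA_adj hv hvw⟩
    by_cases hw : w ∈ A
    · exact Or.inl ⟨hA_adj hw hvw.symm, Or.inl hw⟩
    · exact Or.inr ⟨hv, hw⟩
  · exact hchordal.isClique_of_minimal_separates hS (hv.1.resolve_left hv.2)
      (hw.1.resolve_left hw.2) hvw

/-- **Dirac.** Let `Γ` be a finite connected simplicial graph that is not
complete.  If `Γ` has no induced cycle of length greater than `3`, then there are proper
induced subgraphs `Γ₁`, `Γ₂` of `Γ` (given by vertex sets `S₁`, `S₂`) with `Γ = Γ₁ ∪ Γ₂`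
(every vertex, respectively edge, of `Γ` lies in `Γ₁` or in `Γ₂`) such that `Γ₁ ∩ Γ₂`
(the induced subgraph on `S₁ ∩ S₂`) is a complete graph. -/
theorem exists_clique_cut_decomposition_of_noInducedCycleGT3
    {V : Type} [Fintype V] (Γ : SimpleGraph V)
    (hconn : Γ.Connected)
    (hnotcomplete : ¬ ∀ v w : V, v ≠ w → Γ.Adj v w)
    (hchordal : Γ.NoInducedCycleGT3) :
    ∃ S₁ S₂ : Set V,
      S₁ ≠ Set.univ ∧ S₂ ≠ Set.univ ∧
      S₁ ∪ S₂ = Set.univ ∧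
      (∀ v w : V, Γ.Adj v w → (v ∈ S₁ ∧ w ∈ S₁) ∨ (v ∈ S₂ ∧ w ∈ S₂)) ∧
      (∀ v w : V, v ∈ S₁ ∩ S₂ → w ∈ S₁ ∩ S₂ → v ≠ w → Γ.Adj v w) :=
  exists_clique_cut_decomposition_of_noInducedCycleGT3_general Γ hnotcomplete hchordal
end
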